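/- arXiv:0904.4143 — 2 statements merged into one kernel-verified Lean document; each statement's English description precedes it below -/
import Mathlib

section
/- Suppose τ ∧ τ' < ∞ holds P-almost surely, and let V': X→[0,1] be measurable with V' = 1 on O and V' = 0 on X∖K. If the process (ζ_n)_{n∈ℕ} associated with ψ := V' is an (F_n)-martingale under P, then V'(x) = P(τ < τ' and τ < ∞). -/
/-!
On `{σ < ∞}` the process is eventually constant: once `n ≥ σ` the sum in `ζ_{n+1}` collapses to
`1_O(x_σ)`, because the path avoids `O` before `σ`, and the product term vanishes, because
`x_σ ∈ O ∪ Kᶜ`. Hence `ζ_n → 1_{τ < τ', τ < ∞}` almost surely, and the `ζ_n` are bounded by `2`.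
A bounded martingale has constant expectation, so dominated convergence gives
`V'(x) = E ζ_0 = P(τ < τ', τ < ∞)`.
-/

open MeasureTheory Set Filter

/-- First hitting time of the set `S` by the sequence `x`, valued in `ℕ∞` (`⊤` if never hit). -/
noncomputable def hitTime {X : Type*} (S : Set X) (x : ℕ → X) : ℕ∞ :=
  sInf ((fun t : ℕ => (t : ℕ∞)) '' {t : ℕ | x t ∈ S})

/-- `σ = τ ∧ τ'`: the minimum of the hitting times of `O` and of `X ∖ K`. -/
noncomputable def stopMin {Ω X : Type*} (O K : Set X) (proc : ℕ → Ω → X) (ω : Ω) : ℕ∞ :=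
  min (hitTime O fun t => proc t ω) (hitTime Kᶜ fun t => proc t ω)

/-- `(n ∧ σ)(ω)` as a natural number. -/
noncomputable def stopIdx {Ω X : Type*} (O K : Set X) (proc : ℕ → Ω → X) (n : ℕ) (ω : Ω) : ℕ :=
  (min (n : ℕ∞) (stopMin O K proc ω)).toNat

/-- The process `ζ` associated with `ψ`: `ζ 0 = ψ x` and, for `n ≥ 1`,
`ζ_n = Σ_{t=0}^{(n−1)∧σ} 1_O(x_t) + 1_{K∖O}(x_{(n−1)∧σ}) ⬝ 1_K(x_{n∧σ}) ψ(x_{n∧σ})`. -/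
noncomputable def zeta {Ω X : Type*} (O K : Set X) (proc : ℕ → Ω → X) (x : X)
    (ψ : X → ℝ) : ℕ → Ω → ℝ
  | 0 => fun _ => ψ x
  | n + 1 => fun ω =>
      (∑ t ∈ Finset.range (stopIdx O K proc n ω + 1), O.indicator (1 : X → ℝ) (proc t ω)) +
        (K \ O).indicator (1 : X → ℝ) (proc (stopIdx O K proc n ω) ω) *
          K.indicator ψ (proc (stopIdx O K proc (n + 1) ω) ω)

open Topology

theorem ENat.exists_natCast_le_and_lt_iff {a b : ℕ∞} :
    (∃ n : ℕ, a ≤ n ∧ (n : ℕ∞) < b) ↔ a < b ∧ a < ⊤ := by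
  constructor
  · rintro ⟨n, han, hnb⟩
    exact ⟨han.trans_lt hnb, han.trans_lt (ENat.natCast_lt_top n)⟩
  · rintro ⟨hab, hatop⟩
    lift a to ℕ using hatop.ne
    exact ⟨a, le_rfl, hab⟩

theorem MeasureTheory.Martingale.integral_zero_eq_of_tendsto_ae {Ω E : Type*}
    [NormedAddCommGroup E] [NormedSpace ℝ E] [CompleteSpace E] {m0 : MeasurableSpace Ω}
    {μ : Measure Ω} [IsFiniteMeasure μ] {ℱ : Filtration ℕ m0} {f : ℕ → Ω → E} {g : Ω → E}
    {C : ℝ} (hf : Martingale f ℱ μ) (hbdd : ∀ n, ∀ᵐ ω ∂μ, ‖f n ω‖ ≤ C)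
    (hlim : ∀ᵐ ω ∂μ, Tendsto (fun n => f n ω) atTop (𝓝 (g ω))) :
    ∫ ω, f 0 ω ∂μ = ∫ ω, g ω ∂μ := by
  have hconst : ∀ n, ∫ ω, f n ω ∂μ = ∫ ω, f 0 ω ∂μ := fun n => by
    simpa only [setIntegral_univ] using (hf.setIntegral_eq (Nat.zero_le n) .univ).symm
  have hdom := tendsto_integral_of_dominated_convergence (fun _ => C)
    (fun n => (hf.integrable n).aestronglyMeasurable) (integrable_const C) hbdd hlim
  simp only [hconst] at hdom
  exact tendsto_nhds_unique tendsto_const_nhds hdom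

section HitTime

variable {X : Type*} {S : Set X} {x : ℕ → X} {n : ℕ}

lemma hitTime_le (h : x n ∈ S) : hitTime S x ≤ n :=
  sInf_le ⟨n, h, rfl⟩

lemma notMem_of_lt_hitTime (h : (n : ℕ∞) < hitTime S x) : x n ∉ S :=
  fun hn => (hitTime_le hn).not_gt h

lemma mem_of_hitTime_eq (h : hitTime S x = n) : x n ∈ S := by
  have hne : ((fun t : ℕ => (t : ℕ∞)) '' {t | x t ∈ S}).Nonempty := by
    by_contra hempty
    rw [not_nonempty_iff_eq_empty] at hempty
    simp [hitTime, hempty] at h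
  obtain ⟨m, hm, hmn⟩ := csInf_mem hne
  rw [← hitTime, h, Nat.cast_inj] at hmn
  exact hmn ▸ hm

end HitTime

/-- The event `{τ < τ', τ < ∞}`. -/
def hitBeforeExit {Ω X : Type*} (O K : Set X) (proc : ℕ → Ω → X) : Set Ω :=
  {ω | hitTime O (fun t => proc t ω) < hitTime Kᶜ (fun t => proc t ω) ∧
    hitTime O (fun t => proc t ω) < ⊤}

section Zeta

variable {Ω X : Type*} {O K : Set X} {proc : ℕ → Ω → X} {ω : Ω} {N n : ℕ}

lemma measurableSet_hitBeforeExit [MeasurableSpace Ω]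
    (hτ : ∀ n : ℕ, MeasurableSet {ω | hitTime O (fun t => proc t ω) ≤ (n : ℕ∞)})
    (hτ' : ∀ n : ℕ, MeasurableSet {ω | hitTime Kᶜ (fun t => proc t ω) ≤ (n : ℕ∞)}) :
    MeasurableSet (hitBeforeExit O K proc) := by
  have hunion : hitBeforeExit O K proc = ⋃ n : ℕ,
      {ω | hitTime O (fun t => proc t ω) ≤ n} \ {ω | hitTime Kᶜ (fun t => proc t ω) ≤ n} := by
    ext ω
    simp only [hitBeforeExit, mem_ofPred_eq, mem_iUnion, Set.mem_sdiff, not_le]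
    exact ENat.exists_natCast_le_and_lt_iff.symm
  rw [hunion]
  exact MeasurableSet.iUnion fun n => (hτ n).diff (hτ' n)

lemma stopIdx_eq_of_stopMin_eq (hσ : stopMin O K proc ω = N) (hN : N ≤ n) :
    stopIdx O K proc n ω = N := by
  rw [stopIdx, hσ, min_eq_right (Nat.cast_le.2 hN), ENat.toNat_natCast]

lemma lt_hitTime_of_lt_stopIdx {t : ℕ} (ht : t < stopIdx O K proc n ω) :
    (t : ℕ∞) < hitTime O (fun s => proc s ω) :=
  calc (t : ℕ∞) < (stopIdx O K proc n ω : ℕ∞) := Nat.cast_lt.2 ht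
    _ ≤ min (n : ℕ∞) (stopMin O K proc ω) := ENat.natCast_toNat_le_self _
    _ ≤ hitTime O (fun s => proc s ω) := (min_le_right _ _).trans (min_le_left _ _)

/-- Before time `n ∧ σ` the path has not entered `O`. -/
lemma zeta_succ (x : X) (ψ : X → ℝ) (n : ℕ) (ω : Ω) :
    zeta O K proc x ψ (n + 1) ω =
      O.indicator 1 (proc (stopIdx O K proc n ω) ω) +
        (K \ O).indicator 1 (proc (stopIdx O K proc n ω) ω) *
          K.indicator ψ (proc (stopIdx O K proc (n + 1) ω) ω) := by
  simp only [zeta]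
  rw [Finset.sum_range_succ, Finset.sum_eq_zero, zero_add]
  intro t ht
  exact indicator_of_notMem (notMem_of_lt_hitTime
    (lt_hitTime_of_lt_stopIdx (Finset.mem_range.1 ht))) _

lemma norm_zeta_le_two {x : X} {ψ : X → ℝ} (hψ0 : ∀ y, 0 ≤ ψ y) (hψ1 : ∀ y, ψ y ≤ 1)
    (n : ℕ) (ω : Ω) : ‖zeta O K proc x ψ n ω‖ ≤ 2 := by
  have hind : ∀ (s : Set X) y, 0 ≤ s.indicator (1 : X → ℝ) y ∧ s.indicator (1 : X → ℝ) y ≤ 1 :=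
    fun s y => ⟨indicator_nonneg (fun _ _ => zero_le_one) y,
      indicator_apply_le' (fun _ => le_rfl) (fun _ => zero_le_one)⟩
  have hKψ : ∀ y, 0 ≤ K.indicator ψ y ∧ K.indicator ψ y ≤ 1 := fun y =>
    ⟨indicator_nonneg (fun y _ => hψ0 y) y,
      indicator_apply_le' (fun _ => hψ1 y) (fun _ => zero_le_one)⟩
  cases n with
  | zero =>
    rw [show zeta O K proc x ψ 0 ω = ψ x from rfl, Real.norm_eq_abs, abs_of_nonneg (hψ0 x)]
    linarith [hψ1 x]
  | succ n =>
    rw [zeta_succ, Real.norm_eq_abs, abs_le]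
    obtain ⟨a0, a1⟩ := hind O (proc (stopIdx O K proc n ω) ω)
    obtain ⟨b0, b1⟩ := hind (K \ O) (proc (stopIdx O K proc n ω) ω)
    obtain ⟨c0, c1⟩ := hKψ (proc (stopIdx O K proc (n + 1) ω) ω)
    constructor <;> nlinarith

lemma mem_or_notMem_of_stopMin_eq (hσ : stopMin O K proc ω = N) :
    proc N ω ∈ O ∨ proc N ω ∉ K := by
  unfold stopMin at hσ
  rcases min_choice (hitTime O fun t => proc t ω) (hitTime Kᶜ fun t => proc t ω) with h | h <;>
    rw [h] at hσ
  · exact Or.inl (mem_of_hitTime_eq hσ)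
  · exact Or.inr (mem_of_hitTime_eq hσ)

lemma mem_hitBeforeExit_iff (hOK : O ⊆ K) (hσ : stopMin O K proc ω = N) :
    ω ∈ hitBeforeExit O K proc ↔ proc N ω ∈ O := by
  have hτ : (N : ℕ∞) ≤ hitTime O (fun t => proc t ω) := hσ ▸ min_le_left _ _
  have hτ' : (N : ℕ∞) ≤ hitTime Kᶜ (fun t => proc t ω) := hσ ▸ min_le_right _ _
  constructor
  · rintro ⟨hlt, -⟩
    rw [stopMin, min_eq_left hlt.le] at hσ
    exact mem_of_hitTime_eq hσ
  · intro hN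
    have hτN : hitTime O (fun t => proc t ω) = N := le_antisymm (hitTime_le hN) hτ
    refine ⟨hτN ▸ lt_of_le_of_ne hτ' fun h => ?_, hτN ▸ ENat.natCast_lt_top N⟩
    exact mem_of_hitTime_eq h.symm (hOK hN)

lemma zeta_eventually_eq_indicator (hOK : O ⊆ K) (hσ : stopMin O K proc ω < ⊤)
    (x : X) (ψ : X → ℝ) :
    ∀ᶠ n in atTop, zeta O K proc x ψ n ω = (hitBeforeExit O K proc).indicator 1 ω := by
  lift stopMin O K proc ω to ℕ using hσ.ne with N hN
  have hKO : proc N ω ∉ K \ O := fun h =>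
    (mem_or_notMem_of_stopMin_eq hN.symm).elim h.2 (· h.1)
  filter_upwards [eventually_ge_atTop (N + 1)] with n hn
  obtain ⟨m, rfl⟩ : ∃ m, n = m + 1 := ⟨n - 1, by omega⟩
  rw [zeta_succ, stopIdx_eq_of_stopMin_eq hN.symm (by omega), indicator_of_notMem hKO,
    zero_mul, add_zero]
  by_cases hO : proc N ω ∈ O
  · rw [indicator_of_mem hO, indicator_of_mem ((mem_hitBeforeExit_iff hOK hN.symm).2 hO),
      Pi.one_apply, Pi.one_apply]
  · rw [indicator_of_notMem hO,
      indicator_of_notMem (mt (mem_hitBeforeExit_iff hOK hN.symm).1 hO)]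

end Zeta

theorem stmt7_general {Ω X : Type*} {m0 : MeasurableSpace Ω} [MeasurableSpace X]
    (P : Measure Ω) [IsProbabilityMeasure P] (ℱ : Filtration ℕ m0)
    (O K : Set X) (hOK : O ⊂ K)
    (proc : ℕ → Ω → X)
    (x : X)
    (hτstop : ∀ n : ℕ,
      MeasurableSet[ℱ n] {ω | hitTime O (fun t => proc t ω) ≤ (n : ℕ∞)})
    (hτ'stop : ∀ n : ℕ,
      MeasurableSet[ℱ n] {ω | hitTime Kᶜ (fun t => proc t ω) ≤ (n : ℕ∞)})
    (hfin : ∀ᵐ ω ∂P, stopMin O K proc ω < ⊤)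
    (V' : X → ℝ) (hV'0 : ∀ y, 0 ≤ V' y) (hV'1 : ∀ y, V' y ≤ 1)
    (hmart : Martingale (zeta O K proc x V') ℱ P) :
    V' x = (P {ω | hitTime O (fun t => proc t ω) < hitTime Kᶜ (fun t => proc t ω) ∧
      hitTime O (fun t => proc t ω) < ⊤}).toReal := by
  have hA : MeasurableSet (hitBeforeExit O K proc) := measurableSet_hitBeforeExit
    (fun n => ℱ.le n _ (hτstop n)) (fun n => ℱ.le n _ (hτ'stop n))
  have hlim : ∀ᵐ ω ∂P, Tendsto (fun n => zeta O K proc x V' n ω) atTop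
      (𝓝 ((hitBeforeExit O K proc).indicator 1 ω)) := by
    filter_upwards [hfin] with ω hω
    exact tendsto_nhds_of_eventually_eq (zeta_eventually_eq_indicator hOK.subset hω x V')
  calc V' x = ∫ ω, zeta O K proc x V' 0 ω ∂P := by simp [zeta]
    _ = ∫ ω, (hitBeforeExit O K proc).indicator 1 ω ∂P :=
      hmart.integral_zero_eq_of_tendsto_ae
        (fun n => Eventually.of_forall (norm_zeta_le_two hV'0 hV'1 n)) hlim
    _ = _ := by rw [integral_indicator_one hA, measureReal_def]; rfl

theorem stmt7 {Ω X : Type*} {m0 : MeasurableSpace Ω} [MeasurableSpace X]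
    (P : Measure Ω) [IsProbabilityMeasure P] (ℱ : Filtration ℕ m0)
    (O K : Set X) (hmO : MeasurableSet O) (hmK : MeasurableSet K) (hOK : O ⊂ K)
    (proc : ℕ → Ω → X) (hadapt : ∀ n, Measurable[ℱ n] (proc n))
    (x : X) (hx0 : ∀ᵐ ω ∂P, proc 0 ω = x)
    (hτstop : ∀ n : ℕ,
      MeasurableSet[ℱ n] {ω | hitTime O (fun t => proc t ω) ≤ (n : ℕ∞)})
    (hτ'stop : ∀ n : ℕ,
      MeasurableSet[ℱ n] {ω | hitTime Kᶜ (fun t => proc t ω) ≤ (n : ℕ∞)})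
    (hfin : ∀ᵐ ω ∂P, stopMin O K proc ω < ⊤)
    (V' : X → ℝ) (hV'meas : Measurable V') (hV'0 : ∀ y, 0 ≤ V' y) (hV'1 : ∀ y, V' y ≤ 1)
    (hV'O : ∀ y ∈ O, V' y = 1) (hV'K : ∀ y ∉ K, V' y = 0)
    (hmart : Martingale (zeta O K proc x V') ℱ P) :
    V' x = (P {ω | hitTime O (fun t => proc t ω) < hitTime Kᶜ (fun t => proc t ω) ∧
      hitTime O (fun t => proc t ω) < ⊤}).toReal :=
  stmt7_general P ℱ O K hOK proc x hτstop hτ'stop hfin V' hV'0 hV'1 hmart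
end

section
/- Let ψ: X→[0,1] be measurable with ψ = 1 on O and ψ = 0 on X∖K, and suppose that for every n ∈ ℕ, P-almost surely on the event {σ > n}, E[1_K(x_{n+1}) ψ(x_{n+1}) | F_n] ≤ ψ(x_n). Then the following are equivalent: (i) lim_{n→∞} E[ζ_n] = ψ(x) (thriftiness); (ii) the process (ζ_n)_{n∈ℕ} associated with ψ is an (F_n)-martingale under P; (iii) for every n ∈ ℕ, P-almost surely on the event {σ > n}, E[1_K(x_{n+1}) ψ(x_{n+1}) | F_n] = ψ(x_n) (the action at stage n conserves ψ). -/
open MeasureTheory Set Filter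

/-!
Before time `σ` the process is `ζ_n = ψ(x_n)`; from `σ` on it is frozen at `1_O(x_σ)`, which is
`ψ(x_σ)` because `ψ` is `1` on `O` and `0` off `K`. Hence
`E[ζ_{n+1} | F_n] = ζ_n + 1_{σ > n} (E[1_K ψ(x_{n+1}) | F_n] - ψ(x_n))`,
so the hypothesis makes `ζ` a `[0, 1]`-valued supermartingale, and the martingale property at
step `n` is exactly conservation at stage `n`. The expectations of a supermartingale decrease; it
is a martingale iff they stay at `E[ζ_0] = ψ(x)`, since then every gap
`ζ_n - E[ζ_{n+1} | F_n]` is nonnegative with zero mean.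
-/

section General

variable {Ω : Type*} {m0 : MeasurableSpace Ω} {μ : Measure Ω}

lemma integrable_of_ae_mem_Icc [IsFiniteMeasure μ] {f : Ω → ℝ} (hf : AEStronglyMeasurable f μ)
    (hbound : ∀ᵐ ω ∂μ, f ω ∈ Icc 0 1) : Integrable f μ :=
  Integrable.of_bound hf 1 (hbound.mono fun _ h => by rw [Real.norm_of_nonneg h.1]; exact h.2)

lemma ae_eq_add_indicator_iff {M : Type*} [AddGroup M] {g d : Ω → M} {s : Set Ω} :
    g =ᵐ[μ] g + s.indicator d ↔ ∀ᵐ ω ∂μ, ω ∈ s → d ω = 0 := by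
  refine eventually_congr (Eventually.of_forall fun ω => ?_)
  rw [Pi.add_apply, left_eq_add, indicator_apply_eq_zero]

section Nat

variable [IsFiniteMeasure μ] {𝒢 : Filtration ℕ m0} {f : ℕ → Ω → ℝ}

lemma martingale_nat_iff (hadp : StronglyAdapted 𝒢 f) (hint : ∀ i, Integrable (f i) μ) :
    Martingale f 𝒢 μ ↔ ∀ i, f i =ᵐ[μ] μ[f (i + 1) | 𝒢 i] :=
  ⟨fun hf i => (hf.condExp_ae_eq i.le_succ).symm, martingale_nat hadp hint⟩

lemma MeasureTheory.Supermartingale.martingale_iff_tendsto_integral (hf : Supermartingale f 𝒢 μ) :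
    Martingale f 𝒢 μ ↔ Tendsto (fun n => ∫ ω, f n ω ∂μ) atTop (nhds (∫ ω, f 0 ω ∂μ)) := by
  have hanti : Antitone fun n => ∫ ω, f n ω ∂μ := fun i j hij => by
    simpa using hf.setIntegral_le hij MeasurableSet.univ
  constructor
  · intro hm
    have hconst : ∀ n, ∫ ω, f n ω ∂μ = ∫ ω, f 0 ω ∂μ := fun n => by
      simpa using (hm.setIntegral_eq (Nat.zero_le n) MeasurableSet.univ).symm
    simp only [hconst, tendsto_const_nhds]
  · intro hlim
    have hconst : ∀ n, ∫ ω, f n ω ∂μ = ∫ ω, f 0 ω ∂μ := fun n =>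
      le_antisymm (hanti (Nat.zero_le n)) (hanti.le_of_tendsto hlim n)
    refine martingale_nat hf.stronglyAdapted hf.integrable fun i => ?_
    have hgap_nonneg : 0 ≤ᵐ[μ] f i - μ[f (i + 1) | 𝒢 i] := by
      filter_upwards [hf.condExp_ae_le i.le_succ] with ω h using sub_nonneg.2 h
    have hgap_integral : ∫ ω, (f i - μ[f (i + 1) | 𝒢 i]) ω ∂μ = 0 := by
      rw [integral_sub' (hf.integrable i) integrable_condExp, integral_condExp (𝒢.le i),
        hconst i, hconst (i + 1), sub_self]
    filter_upwards [(integral_eq_zero_iff_of_nonneg_ae hgap_nonneg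
      ((hf.integrable i).sub integrable_condExp)).1 hgap_integral] with ω h
    exact sub_eq_zero.1 h

end Nat

end General

section HittingTimes

variable {Ω X : Type*} {O K : Set X} {proc : ℕ → Ω → X} {ω : Ω}

lemma hitTime_le_iff (S : Set X) (x : ℕ → X) (n : ℕ) :
    hitTime S x ≤ n ↔ ∃ t ≤ n, x t ∈ S := by
  constructor
  · intro h
    have hne : ((fun t : ℕ => (t : ℕ∞)) '' {t | x t ∈ S}).Nonempty := by
      by_contra he
      simp [hitTime, Set.not_nonempty_iff_eq_empty.1 he] at h
    obtain ⟨t, ht, htS⟩ := csInf_mem hne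
    refine ⟨t, ?_, ht⟩
    rwa [hitTime, ← htS, Nat.cast_le] at h
  · rintro ⟨t, htn, ht⟩
    exact (sInf_le (mem_image_of_mem (fun t : ℕ => (t : ℕ∞)) ht)).trans (Nat.cast_le.mpr htn)

lemma stopMin_le_iff {n : ℕ} : stopMin O K proc ω ≤ n ↔ ∃ t ≤ n, proc t ω ∉ K \ O := by
  simp only [stopMin, min_le_iff, hitTime_le_iff, Set.mem_sdiff, mem_compl_iff, not_and_or,
    not_not, ← exists_or, ← and_or_left, or_comm]

lemma lt_stopMin_iff {n : ℕ} : n < stopMin O K proc ω ↔ ∀ t ≤ n, proc t ω ∈ K \ O := by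
  simpa using stopMin_le_iff.not

lemma mem_of_lt_stopMin {t : ℕ} (h : t < stopMin O K proc ω) : proc t ω ∈ K \ O :=
  lt_stopMin_iff.1 h t le_rfl

lemma notMem_of_stopMin_eq {k : ℕ} (h : stopMin O K proc ω = k) : proc k ω ∉ K \ O := by
  obtain ⟨t, htk, ht⟩ := stopMin_le_iff.1 h.le
  obtain rfl | htk := htk.eq_or_lt
  · exact ht
  · exact absurd (mem_of_lt_stopMin (h ▸ Nat.cast_lt.2 htk)) ht

lemma stopIdx_of_le_stopMin {n : ℕ} (h : n ≤ stopMin O K proc ω) : stopIdx O K proc n ω = n := by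
  rw [stopIdx, min_eq_left h, ENat.toNat_natCast]

lemma stopIdx_of_stopMin_eq {n k : ℕ} (h : stopMin O K proc ω = k) (hkn : k ≤ n) :
    stopIdx O K proc n ω = k := by
  rw [stopIdx, h, min_eq_right (Nat.cast_le.2 hkn), ENat.toNat_natCast]

lemma isStoppingTime_stopMin {m0 : MeasurableSpace Ω} {ℱ : Filtration ℕ m0}
    (hτ : ∀ n : ℕ, MeasurableSet[ℱ n] {ω | hitTime O (fun t => proc t ω) ≤ (n : ℕ∞)})
    (hτ' : ∀ n : ℕ, MeasurableSet[ℱ n] {ω | hitTime Kᶜ (fun t => proc t ω) ≤ (n : ℕ∞)}) :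
    IsStoppingTime ℱ (stopMin O K proc) := fun n => by
  change MeasurableSet[ℱ n] {ω | stopMin O K proc ω ≤ (n : ℕ∞)}
  simpa only [stopMin, min_le_iff, Set.ofPred_or] using (hτ n).union (hτ' n)

lemma ENat.toNat_eq_untopA {a : ℕ∞} (h : a ≠ ⊤) : a.toNat = WithTop.untopA a := by
  lift a to ℕ using h
  rfl

lemma stoppedProcess_stopMin_apply {β : Type*} (u : ℕ → Ω → β) (n : ℕ) :
    stoppedProcess u (stopMin O K proc) n ω = u (stopIdx O K proc n ω) ω := by
  rw [stopIdx, ENat.toNat_eq_untopA ((min_le_left _ _).trans_lt (ENat.natCast_lt_top n)).ne]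
  rfl

end HittingTimes

section Zeta

variable {Ω X : Type*} {O K : Set X} {proc : ℕ → Ω → X} {x : X} {ψ : X → ℝ} {ω : Ω}

lemma zeta_succ_of_lt_stopMin {n : ℕ} (h : n < stopMin O K proc ω) :
    zeta O K proc x ψ (n + 1) ω = K.indicator ψ (proc (n + 1) ω) := by
  have halive := lt_stopMin_iff.1 h
  simp only [zeta, stopIdx_of_le_stopMin h.le, stopIdx_of_le_stopMin (Order.add_one_le_of_lt h)]
  rw [Finset.sum_eq_zero fun t ht => indicator_of_notMem
    (halive t (Nat.lt_succ_iff.1 (Finset.mem_range.1 ht))).2 _,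
    indicator_of_mem (halive n le_rfl), Pi.one_apply, zero_add, one_mul]

lemma zeta_of_lt_stopMin (hx : proc 0 ω = x) {n : ℕ} (h : n < stopMin O K proc ω) :
    zeta O K proc x ψ n ω = ψ (proc n ω) := by
  cases n with
  | zero => rw [hx]; rfl
  | succ n =>
    rw [zeta_succ_of_lt_stopMin ((Nat.cast_lt.2 n.lt_succ_self).trans h),
      indicator_of_mem (mem_of_lt_stopMin h).1]

lemma zeta_succ_of_stopMin_eq {n k : ℕ} (h : stopMin O K proc ω = k) (hkn : k ≤ n) :
    zeta O K proc x ψ (n + 1) ω = O.indicator 1 (proc k ω) := by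
  simp only [zeta, stopIdx_of_stopMin_eq h hkn, stopIdx_of_stopMin_eq h (hkn.trans n.le_succ)]
  rw [Finset.sum_range_succ, Finset.sum_eq_zero fun t ht => indicator_of_notMem
    (mem_of_lt_stopMin (h ▸ Nat.cast_lt.2 (Finset.mem_range.1 ht))).2 _,
    indicator_of_notMem (notMem_of_stopMin_eq h), zero_add, zero_mul, add_zero]

lemma eq_indicator_one_of_notMem_diff (hψO : ∀ y ∈ O, ψ y = 1) (hψK : ∀ y ∉ K, ψ y = 0)
    {y : X} (hy : y ∉ K \ O) : ψ y = O.indicator 1 y := by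
  by_cases hyO : y ∈ O
  · rw [indicator_of_mem hyO, hψO y hyO, Pi.one_apply]
  · rw [indicator_of_notMem hyO, hψK y fun hyK => hy ⟨hyK, hyO⟩]

lemma zeta_of_stopMin_eq (hψO : ∀ y ∈ O, ψ y = 1) (hψK : ∀ y ∉ K, ψ y = 0)
    (hx : proc 0 ω = x) {n k : ℕ} (h : stopMin O K proc ω = k) (hkn : k ≤ n) :
    zeta O K proc x ψ n ω = O.indicator 1 (proc k ω) := by
  induction n, hkn using Nat.le_induction with
  | base =>
    rw [← eq_indicator_one_of_notMem_diff hψO hψK (notMem_of_stopMin_eq h)]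
    cases k with
    | zero => rw [hx]; rfl
    | succ k =>
      rw [zeta_succ_of_lt_stopMin (h ▸ Nat.cast_lt.2 k.lt_succ_self),
        indicator_apply_eq_self.2 (hψK _)]
  | succ n hkn _ => exact zeta_succ_of_stopMin_eq h hkn

lemma zeta_succ_eq_add_indicator (hψO : ∀ y ∈ O, ψ y = 1) (hψK : ∀ y ∉ K, ψ y = 0)
    (hx : proc 0 ω = x) (n : ℕ) :
    zeta O K proc x ψ (n + 1) ω = zeta O K proc x ψ n ω +
      {ω' | (n : ℕ∞) < stopMin O K proc ω'}.indicator
        (fun ω' => K.indicator ψ (proc (n + 1) ω') - ψ (proc n ω')) ω := by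
  by_cases h : ω ∈ {ω' | (n : ℕ∞) < stopMin O K proc ω'}
  · rw [indicator_of_mem h, zeta_succ_of_lt_stopMin h, zeta_of_lt_stopMin hx h]
    ring
  · obtain ⟨k, hk, hkn⟩ := ENat.le_natCast_iff.1 (not_lt.1 h)
    rw [indicator_of_notMem h, add_zero, zeta_succ_of_stopMin_eq hk hkn,
      zeta_of_stopMin_eq hψO hψK hx hk hkn]

lemma zeta_mem_Icc (hψ0 : ∀ y, 0 ≤ ψ y) (hψ1 : ∀ y, ψ y ≤ 1)
    (hψO : ∀ y ∈ O, ψ y = 1) (hψK : ∀ y ∉ K, ψ y = 0) (hx : proc 0 ω = x) (n : ℕ) :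
    zeta O K proc x ψ n ω ∈ Icc 0 1 := by
  by_cases h : (n : ℕ∞) < stopMin O K proc ω
  · rw [zeta_of_lt_stopMin hx h]
    exact ⟨hψ0 _, hψ1 _⟩
  · obtain ⟨k, hk, hkn⟩ := ENat.le_natCast_iff.1 (not_lt.1 h)
    rw [zeta_of_stopMin_eq hψO hψK hx hk hkn]
    by_cases hO : proc k ω ∈ O <;> simp [hO]

lemma zeta_succ_eq_stoppedProcess (n : ℕ) :
    zeta O K proc x ψ (n + 1) =
      stoppedProcess (fun m ω => ∑ t ∈ Finset.range (m + 1), O.indicator 1 (proc t ω))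
          (stopMin O K proc) n +
        stoppedProcess (fun m ω => (K \ O).indicator 1 (proc m ω)) (stopMin O K proc) n *
          stoppedProcess (fun m ω => K.indicator ψ (proc m ω)) (stopMin O K proc) (n + 1) := by
  ext ω
  simp only [Pi.add_apply, Pi.mul_apply, stoppedProcess_stopMin_apply]
  rfl

end Zeta

section Measurability

variable {Ω X : Type*} {m0 : MeasurableSpace Ω} {ℱ : Filtration ℕ m0}
  {P : Measure Ω} [IsFiniteMeasure P] {O K : Set X} {proc : ℕ → Ω → X} {x : X} {ψ : X → ℝ}

lemma integrable_zeta (hζ : StronglyAdapted ℱ (zeta O K proc x ψ)) (hψ0 : ∀ y, 0 ≤ ψ y)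
    (hψ1 : ∀ y, ψ y ≤ 1) (hψO : ∀ y ∈ O, ψ y = 1) (hψK : ∀ y ∉ K, ψ y = 0)
    (hx0 : ∀ᵐ ω ∂P, proc 0 ω = x) (n : ℕ) : Integrable (zeta O K proc x ψ n) P :=
  integrable_of_ae_mem_Icc ((hζ n).mono (ℱ.le n)).aestronglyMeasurable
    (hx0.mono fun _ hx => zeta_mem_Icc hψ0 hψ1 hψO hψK hx n)

variable [MeasurableSpace X]

lemma stronglyAdapted_zeta (hmO : MeasurableSet O) (hmK : MeasurableSet K)
    (hadapt : ∀ n, Measurable[ℱ n] (proc n)) (hσ : IsStoppingTime ℱ (stopMin O K proc))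
    (hψ : Measurable ψ) : StronglyAdapted ℱ (zeta O K proc x ψ) := by
  have hstop {u : ℕ → Ω → ℝ} (hu : ∀ n, Measurable[ℱ n] (u n)) :
      StronglyAdapted ℱ (stoppedProcess u (stopMin O K proc)) :=
    StronglyAdapted.stoppedProcess_of_discrete (fun n => (hu n).stronglyMeasurable) hσ
  have hcomp {g : X → ℝ} (hg : Measurable g) (n : ℕ) : Measurable[ℱ n] fun ω => g (proc n ω) :=
    hg.comp (hadapt n)
  have hsum (m : ℕ) :
      Measurable[ℱ m] fun ω => ∑ t ∈ Finset.range (m + 1), O.indicator 1 (proc t ω) :=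
    Finset.measurable_sum _ fun t ht => (hcomp (measurable_one.indicator hmO) t).mono
      (ℱ.mono (Nat.lt_succ_iff.1 (Finset.mem_range.1 ht))) le_rfl
  rintro (_ | n)
  · exact stronglyMeasurable_const
  · rw [zeta_succ_eq_stoppedProcess]
    exact ((hstop hsum n).mono (ℱ.mono n.le_succ)).add
      (((hstop (hcomp (measurable_one.indicator (hmK.diff hmO))) n).mono (ℱ.mono n.le_succ)).mul
        (hstop (hcomp (hψ.indicator hmK)) (n + 1)))

lemma condExp_zeta_succ (hmK : MeasurableSet K)
    (hadapt : ∀ n, Measurable[ℱ n] (proc n)) (hσ : IsStoppingTime ℱ (stopMin O K proc))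
    (hψ : Measurable ψ) (hψ0 : ∀ y, 0 ≤ ψ y) (hψ1 : ∀ y, ψ y ≤ 1) (hψO : ∀ y ∈ O, ψ y = 1)
    (hψK : ∀ y ∉ K, ψ y = 0) (hx0 : ∀ᵐ ω ∂P, proc 0 ω = x)
    (hζ : StronglyAdapted ℱ (zeta O K proc x ψ)) (n : ℕ) :
    P[zeta O K proc x ψ (n + 1) | ℱ n] =ᵐ[P] zeta O K proc x ψ n +
      {ω | (n : ℕ∞) < stopMin O K proc ω}.indicator
        (P[fun ω => K.indicator ψ (proc (n + 1) ω) | ℱ n] - fun ω => ψ (proc n ω)) := by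
  set B := {ω | (n : ℕ∞) < stopMin O K proc ω}
  set g := fun ω => K.indicator ψ (proc (n + 1) ω)
  set u := fun ω => ψ (proc n ω)
  have hB : MeasurableSet[ℱ n] B := hσ.measurableSet_gt n
  have hu : StronglyMeasurable[ℱ n] u := (hψ.comp (hadapt n)).stronglyMeasurable
  have hg_int : Integrable g P :=
    integrable_of_ae_mem_Icc
      ((hψ.indicator hmK).comp ((hadapt (n + 1)).mono (ℱ.le _) le_rfl)).aestronglyMeasurable
      (Eventually.of_forall fun ω => by
        simp only [g, indicator_apply_eq_self.2 (hψK _)]; exact ⟨hψ0 _, hψ1 _⟩)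
  have hu_int : Integrable u P :=
    integrable_of_ae_mem_Icc (hu.mono (ℱ.le n)).aestronglyMeasurable
      (Eventually.of_forall fun ω => ⟨hψ0 _, hψ1 _⟩)
  have hζ_int := integrable_zeta hζ hψ0 hψ1 hψO hψK hx0
  calc P[zeta O K proc x ψ (n + 1) | ℱ n]
      =ᵐ[P] P[zeta O K proc x ψ n + B.indicator (g - u) | ℱ n] :=
        condExp_congr_ae (hx0.mono fun ω hx => zeta_succ_eq_add_indicator hψO hψK hx n)
    _ =ᵐ[P] P[zeta O K proc x ψ n | ℱ n] + P[B.indicator (g - u) | ℱ n] :=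
        condExp_add (hζ_int n) ((hg_int.sub hu_int).indicator (ℱ.le n _ hB)) _
    _ =ᵐ[P] zeta O K proc x ψ n + B.indicator (P[g | ℱ n] - u) := by
        rw [condExp_of_stronglyMeasurable (ℱ.le n) (hζ n) (hζ_int n)]
        refine EventuallyEq.rfl.add ((condExp_indicator (hg_int.sub hu_int) hB).trans ?_)
        refine EventuallyEq.indicator ((condExp_sub hg_int hu_int _).trans ?_)
        rw [condExp_of_stronglyMeasurable (ℱ.le n) hu hu_int]

end Measurability

theorem stmt10_general {Ω X : Type*} {m0 : MeasurableSpace Ω} [MeasurableSpace X]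
    (P : Measure Ω) [IsProbabilityMeasure P] (ℱ : Filtration ℕ m0)
    (O K : Set X) (hmO : MeasurableSet O) (hmK : MeasurableSet K)
    (proc : ℕ → Ω → X) (hadapt : ∀ n, Measurable[ℱ n] (proc n))
    (x : X) (hx0 : ∀ᵐ ω ∂P, proc 0 ω = x)
    (hτstop : ∀ n : ℕ,
      MeasurableSet[ℱ n] {ω | hitTime O (fun t => proc t ω) ≤ (n : ℕ∞)})
    (hτ'stop : ∀ n : ℕ,
      MeasurableSet[ℱ n] {ω | hitTime Kᶜ (fun t => proc t ω) ≤ (n : ℕ∞)})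
    (ψ : X → ℝ) (hψmeas : Measurable ψ) (hψ0 : ∀ y, 0 ≤ ψ y) (hψ1 : ∀ y, ψ y ≤ 1)
    (hψO : ∀ y ∈ O, ψ y = 1) (hψK : ∀ y ∉ K, ψ y = 0)
    -- the conservation inequality: a.s. on `{σ > n}`,
    -- `E[1_K(x_{n+1}) ψ(x_{n+1}) | F_n] ≤ ψ(x_n)`
    (hcons : ∀ n : ℕ, ∀ᵐ ω ∂P, (n : ℕ∞) < stopMin O K proc ω →
      (P[fun ω' => K.indicator ψ (proc (n + 1) ω') | ℱ n]) ω ≤ ψ (proc n ω)) :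
    ((Tendsto (fun n => ∫ ω, zeta O K proc x ψ n ω ∂P) atTop (nhds (ψ x))) ↔
      Martingale (zeta O K proc x ψ) ℱ P) ∧
    (Martingale (zeta O K proc x ψ) ℱ P ↔
      ∀ n : ℕ, ∀ᵐ ω ∂P, (n : ℕ∞) < stopMin O K proc ω →
        (P[fun ω' => K.indicator ψ (proc (n + 1) ω') | ℱ n]) ω = ψ (proc n ω)) := by
  have hσ := isStoppingTime_stopMin hτstop hτ'stop
  have hζ : StronglyAdapted ℱ (zeta O K proc x ψ) :=
    stronglyAdapted_zeta hmO hmK hadapt hσ hψmeas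
  have hint := integrable_zeta hζ hψ0 hψ1 hψO hψK hx0
  have hcond := condExp_zeta_succ hmK hadapt hσ hψmeas hψ0 hψ1 hψO hψK hx0 hζ
  have hsuper : Supermartingale (zeta O K proc x ψ) ℱ P :=
    supermartingale_nat hζ hint fun n => by
      filter_upwards [hcond n, hcons n] with ω hω hle
      rw [hω, Pi.add_apply, add_le_iff_nonpos_right]
      exact indicator_apply_nonpos fun hlt => sub_nonpos.2 (hle hlt)
  have hstep (n : ℕ) : zeta O K proc x ψ n =ᵐ[P] P[zeta O K proc x ψ (n + 1) | ℱ n] ↔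
      ∀ᵐ ω ∂P, (n : ℕ∞) < stopMin O K proc ω →
        (P[fun ω' => K.indicator ψ (proc (n + 1) ω') | ℱ n]) ω = ψ (proc n ω) := by
    simp only [(hcond n).congr_right, ae_eq_add_indicator_iff, mem_ofPred_eq, Pi.sub_apply,
      sub_eq_zero]
  refine ⟨?_, (martingale_nat_iff hζ hint).trans (forall_congr' hstep)⟩
  rw [hsuper.martingale_iff_tendsto_integral]
  simp [zeta]

theorem stmt10 {Ω X : Type*} {m0 : MeasurableSpace Ω} [MeasurableSpace X]
    (P : Measure Ω) [IsProbabilityMeasure P] (ℱ : Filtration ℕ m0)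
    (O K : Set X) (hmO : MeasurableSet O) (hmK : MeasurableSet K) (hOK : O ⊂ K)
    (proc : ℕ → Ω → X) (hadapt : ∀ n, Measurable[ℱ n] (proc n))
    (x : X) (hx0 : ∀ᵐ ω ∂P, proc 0 ω = x)
    (hτstop : ∀ n : ℕ,
      MeasurableSet[ℱ n] {ω | hitTime O (fun t => proc t ω) ≤ (n : ℕ∞)})
    (hτ'stop : ∀ n : ℕ,
      MeasurableSet[ℱ n] {ω | hitTime Kᶜ (fun t => proc t ω) ≤ (n : ℕ∞)})
    (ψ : X → ℝ) (hψmeas : Measurable ψ) (hψ0 : ∀ y, 0 ≤ ψ y) (hψ1 : ∀ y, ψ y ≤ 1)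
    (hψO : ∀ y ∈ O, ψ y = 1) (hψK : ∀ y ∉ K, ψ y = 0)
    -- the conservation inequality: a.s. on `{σ > n}`,
    -- `E[1_K(x_{n+1}) ψ(x_{n+1}) | F_n] ≤ ψ(x_n)`
    (hcons : ∀ n : ℕ, ∀ᵐ ω ∂P, (n : ℕ∞) < stopMin O K proc ω →
      (P[fun ω' => K.indicator ψ (proc (n + 1) ω') | ℱ n]) ω ≤ ψ (proc n ω)) :
    ((Tendsto (fun n => ∫ ω, zeta O K proc x ψ n ω ∂P) atTop (nhds (ψ x))) ↔
      Martingale (zeta O K proc x ψ) ℱ P) ∧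
    (Martingale (zeta O K proc x ψ) ℱ P ↔
      ∀ n : ℕ, ∀ᵐ ω ∂P, (n : ℕ∞) < stopMin O K proc ω →
        (P[fun ω' => K.indicator ψ (proc (n + 1) ω') | ℱ n]) ω = ψ (proc n ω)) :=
  stmt10_general P ℱ O K hmO hmK proc hadapt x hx0 hτstop hτ'stop ψ hψmeas hψ0 hψ1 hψO hψK hcons
end
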